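/- arXiv:math/0304038 — 3 statements merged into one kernel-verified Lean document; each statement's English description precedes it below -/
import Mathlib

section
/- Let L be a Lie superalgebra over R, let P : L → L be an R-linear parity-preserving projector whose image V = P(L) is an abelian subalgebra and which satisfies the distributive law, and let Δ ∈ L be an odd element. Then for every even element ξ ∈ V and every n ≥ 0: Σ_{l=0}^{n} (n choose l) · { {ξ,…,ξ (n−l copies)}_Δ , ξ,…,ξ (l copies) }_Δ = P((−ad ξ)ⁿ Δ²), where ad ξ = [ξ, ·] and the right-hand side equals the n-th derived bracket {ξ,…,ξ}_{Δ²}. -/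
/-!
Put `A = -ad ξ`. Since `ξ` is even, `[x, ξ] = A x` and `A` is a derivation of the bracket, so
iterated brackets with `ξ` are powers of `A`; and `A` kills `V` because `V` is abelian. Hence
the `l`-th term on the left is `P [Aˡ Δ, P Aⁿ⁻ˡ Δ]`. On the right, the Leibniz rule gives
`Aⁿ [Δ, Δ] = Σ (n choose l) [Aˡ Δ, Aⁿ⁻ˡ Δ]`; the distributive law splits `P` of each term into
two, which agree after `l ↦ n - l` because the bracket is symmetric on odd elements, and the
resulting factor `2` cancels the `1/2` in `Δ²`.
-/

open Finset

/-- The sign `(-1)^e` for a parity `e : ZMod 2`, as an element of `R`. -/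
def sgn (R : Type*) [CommRing R] (e : ZMod 2) : R := if e = 0 then 1 else -1

variable {R : Type*} [CommRing R] {L : Type*} [AddCommGroup L] [Module R L]

/-- Iterated bracket `[...[[z,a₁],a₂],...,aₙ]`. -/
def iterBr (br : L →ₗ[R] L →ₗ[R] L) : L → List L → L
  | z, [] => z
  | z, a :: rest => iterBr br (br z a) rest

/-- The `n`-th higher derived bracket `{a₁,...,aₙ}_Δ := P [...[[Δ,a₁],a₂],...,aₙ]`. -/
def dbr (br : L →ₗ[R] L →ₗ[R] L) (P : L →ₗ[R] L) (Δ : L) (n : ℕ) (a : Fin n → L) : L :=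
  P (iterBr br Δ (List.ofFn a))

/-- The exponent of the Koszul sign of the `(k,l)`-shuffle determined by the
`k`-element subset `S ⊆ {0,...,n-1}` on homogeneous arguments of parities `p i`:
a factor `(-1)^{p i · p j}` for each pair `i < j` with `i ∉ S`, `j ∈ S`. -/
def koszulExp {n : ℕ} (p : Fin n → ZMod 2) (S : Finset (Fin n)) : ZMod 2 :=
  ∑ j ∈ S, ∑ i ∈ Sᶜ.filter (fun i => i < j), p i * p j

/-- The `n`-th Jacobiator
`Jⁿ(a₁,…,aₙ) = Σ_{k+l=n} Σ_{(k,l)-shuffles σ} (−1)^α {{a_{σ(1)},…,a_{σ(k)}}, a_{σ(k+1)},…,a_{σ(n)}}`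
of a family of `n`-ary operations, the sum over `(k,l)`-shuffles being realized as a sum
over the `k`-element subsets `S` of indices (listed in increasing order inside each group),
with `(−1)^α` the Koszul sign of the shuffle on arguments of parities `p i`. -/
def Jac (R : Type*) [CommRing R] {M : Type*} [AddCommGroup M] [Module R M]
    (br : ∀ n : ℕ, (Fin n → M) → M) (n : ℕ) (p : Fin n → ZMod 2) (a : Fin n → M) : M :=
  ∑ S : Finset (Fin n),
    sgn R (koszulExp p S) •
      br (Sᶜ.card + 1)
        (Fin.cons (br S.card (fun i => a ((S.orderIsoOfFin rfl i : Fin n))))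
          (fun i => a ((Sᶜ.orderIsoOfFin rfl i : Fin n))))

theorem LinearMap.ext_of_iSup_eq_top {R M N ι : Type*} [Semiring R] [AddCommMonoid M]
    [AddCommMonoid N] [Module R M] [Module R N] {p : ι → Submodule R M} (hp : ⨆ i, p i = ⊤)
    {f g : M →ₗ[R] N} (h : ∀ i, ∀ x ∈ p i, f x = g x) : f = g :=
  LinearMap.ext fun _ =>
    (hp ▸ iSup_le fun i y hy => h i y hy : ⊤ ≤ LinearMap.eqLocus f g) Submodule.mem_top

section Leibniz

variable {R M N Q : Type*} [CommSemiring R] [AddCommMonoid M] [AddCommMonoid N]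
  [AddCommMonoid Q] [Module R M] [Module R N] [Module R Q]
  (B : M →ₗ[R] N →ₗ[R] Q) {D₁ : Module.End R M} {D₂ : Module.End R N} {D : Module.End R Q}

theorem Module.End.pow_apply_bilinear_of_leibniz
    (hD : ∀ x y, D (B x y) = B (D₁ x) y + B x (D₂ y)) (n : ℕ) (x : M) (y : N) :
    (D ^ n) (B x y) = ∑ ij ∈ antidiagonal n, n.choose ij.1 • B ((D₁ ^ ij.1) x) ((D₂ ^ ij.2) y) := by
  induction n with
  | zero => simp
  | succ n ih =>
    rw [sum_antidiagonal_choose_succ_nsmul (fun i j => B ((D₁ ^ i) x) ((D₂ ^ j) y)) n]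
    simp only [pow_succ', Module.End.mul_apply, ih, map_sum, map_nsmul, hD, nsmul_add,
      sum_add_distrib]
    rw [add_comm]
    congr 1
    refine sum_congr rfl ?_
    rintro ⟨i, j⟩ hij
    rw [Nat.choose_symm_of_eq_add (mem_antidiagonal.1 hij).symm]

theorem Module.End.pow_apply_bilinear_of_leibniz_of_apply_eq_zero
    (hD : ∀ x y, D (B x y) = B (D₁ x) y + B x (D₂ y)) {y : N} (hy : D₂ y = 0) (n : ℕ) (x : M) :
    (D ^ n) (B x y) = B ((D₁ ^ n) x) y := by
  induction n with
  | zero => simp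
  | succ n ih => rw [pow_succ', Module.End.mul_apply, ih, hD, hy, map_zero, add_zero,
      ← Module.End.mul_apply, ← pow_succ']

end Leibniz

theorem iterBr_replicate (br : L →ₗ[R] L →ₗ[R] L) (ξ : L) (k : ℕ) (x : L) :
    iterBr br x (List.replicate k ξ) = (br.flip ξ ^ k) x := by
  induction k generalizing x with
  | zero => rfl
  | succ k ih =>
    rw [List.replicate_succ, iterBr, ih, pow_succ, Module.End.mul_apply, LinearMap.flip_apply]

theorem dbr_const (br : L →ₗ[R] L →ₗ[R] L) (P : L →ₗ[R] L) (Δ ξ : L) (k : ℕ) :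
    dbr br P Δ k (fun _ => ξ) = P ((br.flip ξ ^ k) Δ) := by
  rw [dbr, List.ofFn_const, iterBr_replicate]

theorem dbr_cons_const (br : L →ₗ[R] L →ₗ[R] L) (P : L →ₗ[R] L) (Δ c ξ : L) (l : ℕ) :
    dbr br P Δ (l + 1) (Fin.cons c fun _ => ξ) = P ((br.flip ξ ^ l) (br Δ c)) := by
  rw [dbr, List.ofFn_succ, Fin.cons_zero]
  simp only [Fin.cons_succ, List.ofFn_const]
  rw [iterBr, iterBr_replicate]

theorem sgn_zero : sgn R 0 = 1 := if_pos rfl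

theorem sgn_one : sgn R 1 = -1 := if_neg one_ne_zero

section Superalgebra

variable {grading : ZMod 2 → Submodule R L} {br : L →ₗ[R] L →ₗ[R] L}

theorem flip_eq_neg_of_mem_even (htop : ⨆ i, grading i = ⊤)
    (hskew : ∀ (i j : ZMod 2) (a b : L), a ∈ grading i → b ∈ grading j →
      br a b = (-(sgn R (i * j))) • br b a)
    {ξ : L} (hξ : ξ ∈ grading 0) : br.flip ξ = -br ξ :=
  LinearMap.ext_of_iSup_eq_top htop fun i x hx => by
    rw [LinearMap.flip_apply, hskew i 0 x ξ hx hξ, mul_zero, sgn_zero, neg_one_smul]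
    rfl

theorem br_br_of_mem_even (htop : ⨆ i, grading i = ⊤)
    (hjacobi : ∀ (i j : ZMod 2) (a b c : L), a ∈ grading i → b ∈ grading j →
      br a (br b c) = br (br a b) c + (sgn R (i * j)) • br b (br a c))
    {ξ : L} (hξ : ξ ∈ grading 0) (x y : L) :
    br ξ (br x y) = br (br ξ x) y + br x (br ξ y) := by
  have key : br ξ ∘ₗ br.flip y = br.flip y ∘ₗ br ξ + br.flip (br ξ y) :=
    LinearMap.ext_of_iSup_eq_top htop fun i x hx => by
      simp [hjacobi 0 i ξ x y hξ hx, zero_mul, sgn_zero]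
  exact LinearMap.congr_fun key x

theorem br_comm_of_mem_odd
    (hskew : ∀ (i j : ZMod 2) (a b : L), a ∈ grading i → b ∈ grading j →
      br a b = (-(sgn R (i * j))) • br b a)
    {x y : L} (hx : x ∈ grading 1) (hy : y ∈ grading 1) : br x y = br y x := by
  rw [hskew 1 1 x y hx hy, mul_one, sgn_one, neg_neg, one_smul]

end Superalgebra

theorem proj_pow_apply_self_eq_two_nsmul (B : L →ₗ[R] L →ₗ[R] L) (P : L →ₗ[R] L)
    {D : Module.End R L} (hD : ∀ x y, D (B x y) = B (D x) y + B x (D y))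
    (hdistrib : ∀ x y, P (B x y) = P (B (P x) y) + P (B x (P y))) {Δ : L}
    (hcomm : ∀ i j, B (P ((D ^ i) Δ)) ((D ^ j) Δ) = B ((D ^ j) Δ) (P ((D ^ i) Δ))) (n : ℕ) :
    P ((D ^ n) (B Δ Δ)) =
      2 • ∑ ij ∈ antidiagonal n, n.choose ij.1 • P (B ((D ^ ij.1) Δ) (P ((D ^ ij.2) Δ))) := by
  rw [Module.End.pow_apply_bilinear_of_leibniz B hD, map_sum, two_nsmul]
  have hsplit : ∀ ij ∈ antidiagonal n,
      P (n.choose ij.1 • B ((D ^ ij.1) Δ) ((D ^ ij.2) Δ)) =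
        n.choose ij.2 • P (B ((D ^ ij.2) Δ) (P ((D ^ ij.1) Δ))) +
          n.choose ij.1 • P (B ((D ^ ij.1) Δ) (P ((D ^ ij.2) Δ))) := by
    rintro ⟨i, j⟩ hij
    rw [map_nsmul, hdistrib, hcomm, nsmul_add,
      ← Nat.choose_symm_of_eq_add (mem_antidiagonal.1 hij).symm]
  rw [sum_congr rfl hsplit, sum_add_distrib]
  congr 1
  exact Nat.sum_antidiagonal_swap
    (f := fun ij => n.choose ij.1 • P (B ((D ^ ij.1) Δ) (P ((D ^ ij.2) Δ))))

theorem jacobiator_on_even_element_eq_derived_bracket_of_square_general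
    (R : Type*) [CommRing R] [Invertible (2 : R)]
    (L : Type*) [AddCommGroup L] [Module R L]
    (grading : ZMod 2 → Submodule R L)
    (hdirect : DirectSum.IsInternal grading)
    (br : L →ₗ[R] L →ₗ[R] L)
    (hgrade : ∀ (i j : ZMod 2) (a b : L), a ∈ grading i → b ∈ grading j →
      br a b ∈ grading (i + j))
    (hskew : ∀ (i j : ZMod 2) (a b : L), a ∈ grading i → b ∈ grading j →
      br a b = (-(sgn R (i * j))) • br b a)
    (hjacobi : ∀ (i j : ZMod 2) (a b c : L), a ∈ grading i → b ∈ grading j →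
      br a (br b c) = br (br a b) c + (sgn R (i * j)) • br b (br a c))
    (P : L →ₗ[R] L)
    (hPparity : ∀ (i : ZMod 2) (x : L), x ∈ grading i → P x ∈ grading i)
    (habelian : ∀ x y : L, br (P x) (P y) = 0)
    (hdistrib : ∀ x y : L, P (br x y) = P (br (P x) y) + P (br x (P y)))
    (Δ : L) (hΔ : Δ ∈ grading 1)
    (ξ : L) (hξV : ξ ∈ LinearMap.range P) (hξeven : ξ ∈ grading 0)
    (n : ℕ) :
    (∑ l ∈ Finset.range (n + 1), (n.choose l) •
        dbr br P Δ (l + 1)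
          (Fin.cons (dbr br P Δ (n - l) (fun _ => ξ)) (fun _ => ξ))) =
      P (((-(br ξ)) ^ n) ((⅟(2 : R)) • br Δ Δ)) ∧
    P (((-(br ξ)) ^ n) ((⅟(2 : R)) • br Δ Δ)) =
      dbr br P ((⅟(2 : R)) • br Δ Δ) n (fun _ => ξ) := by
  have htop := hdirect.submodule_iSup_eq_top
  have hflip : br.flip ξ = -br ξ := flip_eq_neg_of_mem_even htop hskew hξeven
  set A : Module.End R L := -br ξ
  have hder (x y : L) : A (br x y) = br (A x) y + br x (A y) := by
    simp only [A, LinearMap.neg_apply, br_br_of_mem_even htop hjacobi hξeven, map_neg, neg_add]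
  have hAP (c : L) : A (P c) = 0 := by
    obtain ⟨u, rfl⟩ := hξV
    exact neg_eq_zero.2 (habelian u c)
  have hodd (k : ℕ) : (A ^ k) Δ ∈ grading 1 := by
    induction k with
    | zero => exact hΔ
    | succ k ih =>
      rw [pow_succ', Module.End.mul_apply]
      exact neg_mem (zero_add (1 : ZMod 2) ▸ hgrade 0 1 ξ _ hξeven ih)
  have hcomm (i j : ℕ) : br (P ((A ^ i) Δ)) ((A ^ j) Δ) = br ((A ^ j) Δ) (P ((A ^ i) Δ)) :=
    br_comm_of_mem_odd hskew (hPparity 1 _ (hodd i)) (hodd j)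
  refine ⟨?_, by rw [dbr_const, hflip]⟩
  rw [map_smul, map_smul, proj_pow_apply_self_eq_two_nsmul br P hder hdistrib hcomm, two_nsmul,
    ← two_smul R, smul_smul, invOf_mul_self, one_smul,
    Nat.sum_antidiagonal_eq_sum_range_succ
      (fun i j => n.choose i • P (br ((A ^ i) Δ) (P ((A ^ j) Δ))))]
  refine sum_congr rfl fun l _ => ?_
  rw [dbr_const, dbr_cons_const, hflip,
    Module.End.pow_apply_bilinear_of_leibniz_of_apply_eq_zero br hder (hAP _)]

/-- For a Lie superalgebra `L` over `R` (with `2` invertible), a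
parity-preserving projector `P` onto an abelian subalgebra satisfying the distributive law,
an odd `Δ ∈ L`, and an even `ξ ∈ V = P(L)`:
`Σ_{l=0}^{n} (n choose l) • { {ξ,…,ξ (n−l copies)}_Δ , ξ,…,ξ (l copies) }_Δ = P((−ad ξ)ⁿ Δ²)`,
and the right-hand side equals the `n`-th derived bracket `{ξ,…,ξ}_{Δ²}`,
where `Δ² = (1/2)[Δ,Δ]`. -/
theorem jacobiator_on_even_element_eq_derived_bracket_of_square
    (R : Type*) [CommRing R] [Invertible (2 : R)]
    (L : Type*) [AddCommGroup L] [Module R L]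
    (grading : ZMod 2 → Submodule R L)
    (hdirect : DirectSum.IsInternal grading)
    (br : L →ₗ[R] L →ₗ[R] L)
    (hgrade : ∀ (i j : ZMod 2) (a b : L), a ∈ grading i → b ∈ grading j →
      br a b ∈ grading (i + j))
    (hskew : ∀ (i j : ZMod 2) (a b : L), a ∈ grading i → b ∈ grading j →
      br a b = (-(sgn R (i * j))) • br b a)
    (hjacobi : ∀ (i j : ZMod 2) (a b c : L), a ∈ grading i → b ∈ grading j →
      br a (br b c) = br (br a b) c + (sgn R (i * j)) • br b (br a c))
    (P : L →ₗ[R] L) (hproj : ∀ x, P (P x) = P x)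
    (hPparity : ∀ (i : ZMod 2) (x : L), x ∈ grading i → P x ∈ grading i)
    (habelian : ∀ x y : L, br (P x) (P y) = 0)
    (hdistrib : ∀ x y : L, P (br x y) = P (br (P x) y) + P (br x (P y)))
    (Δ : L) (hΔ : Δ ∈ grading 1)
    (ξ : L) (hξV : ξ ∈ LinearMap.range P) (hξeven : ξ ∈ grading 0)
    (n : ℕ) :
    (∑ l ∈ Finset.range (n + 1), (n.choose l) •
        dbr br P Δ (l + 1)
          (Fin.cons (dbr br P Δ (n - l) (fun _ => ξ)) (fun _ => ξ))) =
      P (((-(br ξ)) ^ n) ((⅟(2 : R)) • br Δ Δ)) ∧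
    P (((-(br ξ)) ^ n) ((⅟(2 : R)) • br Δ Δ)) =
      dbr br P ((⅟(2 : R)) • br Δ Δ) n (fun _ => ξ) :=
  jacobiator_on_even_element_eq_derived_bracket_of_square_general R L grading hdirect br hgrade
    hskew hjacobi P hPparity habelian hdistrib Δ hΔ ξ hξV hξeven n
end

section
/- Let L be a Lie superalgebra over R, let P : L → L be an R-linear map with P∘P = P whose image V = P(L) is an abelian subalgebra ([Pa,Pb] = 0 for all a,b ∈ L), and let Δ ∈ L be homogeneous. Then the higher derived brackets of Δ are symmetric in the ℤ₂-graded sense: for all homogeneous a₁,…,aₙ ∈ V and every 1 ≤ i < n, {a₁,…,aᵢ,a_{i+1},…,aₙ}_Δ = (−1)^{ãᵢ·ã_{i+1}} {a₁,…,a_{i+1},aᵢ,…,aₙ}_Δ. -/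
variable {R : Type*} [CommRing R] {L : Type*} [AddCommGroup L] [Module R L]

lemma sgn_add (e f : ZMod 2) : sgn R (e + f) = sgn R e * sgn R f := by
  obtain rfl | rfl : e = 0 ∨ e = 1 := by decide +revert
  all_goals obtain rfl | rfl : f = 0 ∨ f = 1 := by decide +revert
  all_goals simp [sgn, show (1 + 1 : ZMod 2) = 0 from rfl]

lemma List.ofFn_eq_take_append_cons_cons_drop {α : Type*} {n : ℕ} (a : Fin n → α)
    (i j : Fin n) (hij : (i : ℕ) + 1 = j) :
    List.ofFn a = (List.ofFn a).take i ++ a i :: a j :: (List.ofFn a).drop (i + 2) := by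
  have drop_i : (List.ofFn a).drop i = a i :: (List.ofFn a).drop (i + 1) := by
    rw [List.drop_eq_getElem_cons (by simp)]; simp
  have drop_j : (List.ofFn a).drop (i + 1) = a j :: (List.ofFn a).drop (i + 2) := by
    rw [List.drop_eq_getElem_cons (by simp; omega)]; simp [hij]; omega
  rw [← drop_j, ← drop_i, List.take_append_drop]

lemma List.ofFn_comp_swap_eq {α : Type*} {n : ℕ} (a : Fin n → α) (i j : Fin n)
    (hij : (i : ℕ) + 1 = j) :
    List.ofFn (a ∘ Equiv.swap i j) =
      (List.ofFn a).take i ++ a j :: a i :: (List.ofFn a).drop (i + 2) := by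
  have swap_eq_self : ∀ k : Fin n, (k : ℕ) < i ∨ (i : ℕ) + 2 ≤ k → Equiv.swap i j k = k :=
    fun k hk => Equiv.swap_apply_of_ne_of_ne (by rintro rfl; omega) (by rintro rfl; omega)
  rw [List.ofFn_eq_take_append_cons_cons_drop _ i j hij]
  congr 1
  · apply List.ext_getElem (by simp)
    intro k hk _
    simp only [List.length_take, List.length_ofFn, lt_min_iff] at hk
    simp [swap_eq_self ⟨k, hk.2⟩ (.inl hk.1)]
  · simp only [Function.comp_apply, Equiv.swap_apply_left, Equiv.swap_apply_right,
      List.cons.injEq, true_and]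
    apply List.ext_getElem (by simp)
    intro k _ _
    simp [swap_eq_self _ (.inr _)]

section iterBr

variable (br : L →ₗ[R] L →ₗ[R] L)

lemma iterBr_smul (c : R) (z : L) (l : List L) :
    iterBr br (c • z) l = c • iterBr br z l := by
  induction l generalizing z with
  | nil => rfl
  | cons x xs ih => simp [iterBr, ih]

lemma iterBr_append (z : L) (l₁ l₂ : List L) :
    iterBr br z (l₁ ++ l₂) = iterBr br (iterBr br z l₁) l₂ := by
  induction l₁ generalizing z with
  | nil => rfl
  | cons x xs ih => simp [iterBr, ih]

lemma exists_iterBr_mem_grading (grading : ZMod 2 → Submodule R L)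
    (hgrade : ∀ (i j : ZMod 2) (a b : L), a ∈ grading i → b ∈ grading j →
      br a b ∈ grading (i + j))
    {z : L} {dz : ZMod 2} (hz : z ∈ grading dz) {l : List L}
    (hl : ∀ x ∈ l, ∃ d, x ∈ grading d) :
    ∃ d, iterBr br z l ∈ grading d := by
  induction l generalizing z dz with
  | nil => exact ⟨dz, hz⟩
  | cons x xs ih =>
    obtain ⟨d, hd⟩ := hl x List.mem_cons_self
    exact ih (hgrade _ _ _ _ hz hd) fun y hy => hl y (List.mem_cons_of_mem _ hy)

end iterBr

lemma br_br_swap_of_br_eq_zero (grading : ZMod 2 → Submodule R L) (br : L →ₗ[R] L →ₗ[R] L)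
    (hgrade : ∀ (i j : ZMod 2) (a b : L), a ∈ grading i → b ∈ grading j →
      br a b ∈ grading (i + j))
    (hskew : ∀ (i j : ZMod 2) (a b : L), a ∈ grading i → b ∈ grading j →
      br a b = (-(sgn R (i * j))) • br b a)
    (hjacobi : ∀ (i j : ZMod 2) (a b c : L), a ∈ grading i → b ∈ grading j →
      br a (br b c) = br (br a b) c + (sgn R (i * j)) • br b (br a c))
    {z x y : L} {dz px py : ZMod 2} (hz : z ∈ grading dz) (hx : x ∈ grading px)
    (hy : y ∈ grading py) (hxy : br x y = 0) :
    br (br z x) y = sgn R (px * py) • br (br z y) x := by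
  have jacobi : br (br z x) y + sgn R (dz * px) • br x (br z y) = 0 := by
    rw [← hjacobi dz px z x y hz hx, hxy, map_zero]
  calc br (br z x) y = -sgn R (dz * px) • br x (br z y) := by
        rw [neg_smul]; exact eq_neg_of_add_eq_zero_left jacobi
    _ = (sgn R (dz * px) * sgn R (px * (dz + py))) • br (br z y) x := by
        rw [hskew px (dz + py) _ _ hx (hgrade _ _ _ _ hz hy), smul_smul, neg_mul_neg]
    _ = sgn R (px * py) • br (br z y) x := by
        rw [← sgn_add]
        congr 2
        exact (by decide : ∀ d p q : ZMod 2, d * p + p * (d + q) = p * q) dz px py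

theorem higher_derived_brackets_symmetric_general
    (R : Type*) [CommRing R]
    (L : Type*) [AddCommGroup L] [Module R L]
    (grading : ZMod 2 → Submodule R L)
    (br : L →ₗ[R] L →ₗ[R] L)
    (hgrade : ∀ (i j : ZMod 2) (a b : L), a ∈ grading i → b ∈ grading j →
      br a b ∈ grading (i + j))
    (hskew : ∀ (i j : ZMod 2) (a b : L), a ∈ grading i → b ∈ grading j →
      br a b = (-(sgn R (i * j))) • br b a)
    (hjacobi : ∀ (i j : ZMod 2) (a b c : L), a ∈ grading i → b ∈ grading j →
      br a (br b c) = br (br a b) c + (sgn R (i * j)) • br b (br a c))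
    (P : L →ₗ[R] L)
    (habelian : ∀ x y : L, br (P x) (P y) = 0)
    (Δ : L) (dΔ : ZMod 2) (hΔ : Δ ∈ grading dΔ)
    (n : ℕ) (p : Fin n → ZMod 2) (a : Fin n → L)
    (haV : ∀ i, a i ∈ LinearMap.range P)
    (hahom : ∀ i, a i ∈ grading (p i))
    (i j : Fin n) (hij : (i : ℕ) + 1 = (j : ℕ)) :
    dbr br P Δ n a = sgn R (p i * p j) • dbr br P Δ n (a ∘ Equiv.swap i j) := by
  have prefix_homogeneous : ∀ x ∈ (List.ofFn a).take i, ∃ d, x ∈ grading d := fun x hx => by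
    obtain ⟨k, rfl⟩ := List.mem_ofFn.mp (List.mem_of_mem_take hx)
    exact ⟨p k, hahom k⟩
  obtain ⟨d, hd⟩ := exists_iterBr_mem_grading br grading hgrade hΔ prefix_homogeneous
  obtain ⟨x, hx⟩ := haV i
  obtain ⟨y, hy⟩ := haV j
  have commute : br (a i) (a j) = 0 := hx ▸ hy ▸ habelian x y
  rw [dbr, dbr, List.ofFn_eq_take_append_cons_cons_drop a i j hij,
    List.ofFn_comp_swap_eq a i j hij, iterBr_append, iterBr_append]
  simp only [iterBr]
  rw [br_br_swap_of_br_eq_zero grading br hgrade hskew hjacobi hd (hahom i) (hahom j) commute,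
    iterBr_smul, map_smul]

/-- Let `L` be a Lie superalgebra over `R`, `P : L → L` an `R`-linear
projector whose image `V = P(L)` is an abelian subalgebra, and `Δ ∈ L` homogeneous.
Then the higher derived brackets of `Δ` are symmetric in the `ℤ₂`-graded sense:
exchanging two adjacent homogeneous arguments of `V` produces the Koszul sign
`(−1)^{ãᵢ·ã_{i+1}}`. -/
theorem higher_derived_brackets_symmetric
    (R : Type*) [CommRing R]
    (L : Type*) [AddCommGroup L] [Module R L]
    (grading : ZMod 2 → Submodule R L)
    (hdirect : DirectSum.IsInternal grading)
    (br : L →ₗ[R] L →ₗ[R] L)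
    (hgrade : ∀ (i j : ZMod 2) (a b : L), a ∈ grading i → b ∈ grading j →
      br a b ∈ grading (i + j))
    (hskew : ∀ (i j : ZMod 2) (a b : L), a ∈ grading i → b ∈ grading j →
      br a b = (-(sgn R (i * j))) • br b a)
    (hjacobi : ∀ (i j : ZMod 2) (a b c : L), a ∈ grading i → b ∈ grading j →
      br a (br b c) = br (br a b) c + (sgn R (i * j)) • br b (br a c))
    (P : L →ₗ[R] L) (hproj : ∀ x, P (P x) = P x)
    (habelian : ∀ x y : L, br (P x) (P y) = 0)
    (Δ : L) (dΔ : ZMod 2) (hΔ : Δ ∈ grading dΔ)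
    (n : ℕ) (p : Fin n → ZMod 2) (a : Fin n → L)
    (haV : ∀ i, a i ∈ LinearMap.range P)
    (hahom : ∀ i, a i ∈ grading (p i))
    (i j : Fin n) (hij : (i : ℕ) + 1 = (j : ℕ)) :
    dbr br P Δ n a = sgn R (p i * p j) • dbr br P Δ n (a ∘ Equiv.swap i j) :=
  higher_derived_brackets_symmetric_general R L grading br hgrade hskew hjacobi P habelian Δ dΔ hΔ n
    p a haV hahom i j hij
end

section
/- Let A be a commutative associative unital algebra over a commutative ring R and let Δ ∈ End(A) be a differential operator of order ≤ s in the sense that every (s+1)-fold commutator […[[Δ, L_{f₀}], L_{f₁}],…, L_{f_s}] with f₀,…,f_s ∈ A vanishes. Then all derived brackets of Δ with more than s arguments vanish, and the s-th derived bracket is a derivation (satisfies the Leibniz rule) in each argument: {f₁,…,f_{s−1}, g·h}_Δ = {f₁,…,f_{s−1}, g}_Δ·h + {f₁,…,f_{s−1}, h}_Δ·g for all f₁,…,f_{s−1}, g, h ∈ A. -/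
/-!
A bracket with more than `s` arguments is built from an `(s+1)`-fold commutator of `Δ`, which
vanishes, by taking further commutators. For the Leibniz rule, for any endomorphism `D` the
defect `{g·h}_D - {g}_D·h - {h}_D·g` equals `[[D, L_g], L_h](1)`; for
`D = [...[Δ, L_{f₁}],..., L_{f_{s-1}}]` this is an `(s+1)`-fold commutator of `Δ` at `1`.
-/

/-- Iterated commutator `[...[[Δ, L_{f₁}], L_{f₂}],..., L_{fₙ}]` of an endomorphism `Δ`
of a commutative algebra `A` with the multiplication operators `L_{fᵢ}`. -/
def iterC (R : Type*) [CommRing R] (A : Type*) [CommRing A] [Algebra R A] :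
    Module.End R A → List A → Module.End R A
  | Δ, [] => Δ
  | Δ, f :: rest =>
      iterC R A (Δ * LinearMap.mulLeft R f - LinearMap.mulLeft R f * Δ) rest

section

variable {R : Type*} [CommRing R] {A : Type*} [CommRing A] [Algebra R A]

lemma iterC_append (Δ : Module.End R A) (fs gs : List A) :
    iterC R A Δ (fs ++ gs) = iterC R A (iterC R A Δ fs) gs := by
  induction fs generalizing Δ with
  | nil => rfl
  | cons f fs ih => exact ih _

lemma iterC_zero (fs : List A) : iterC R A 0 fs = 0 := by
  induction fs with
  | nil => rfl
  | cons f fs ih => simpa only [iterC, zero_mul, mul_zero, sub_zero] using ih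

lemma iterC_singleton_mul_apply_one (D : Module.End R A) (g h : A) :
    iterC R A D [g * h] 1 =
      iterC R A D [g] 1 * h + iterC R A D [h] 1 * g + iterC R A D [g, h] 1 := by
  simp only [iterC, LinearMap.sub_apply, Module.End.mul_apply,
    LinearMap.mulLeft_apply, mul_one]
  ring

variable {Δ : Module.End R A} {s : ℕ}

lemma iterC_eq_zero_of_length_eq
    (horder : ∀ f : Fin (s + 1) → A, iterC R A Δ (List.ofFn f) = 0)
    {fs : List A} (hfs : fs.length = s + 1) : iterC R A Δ fs = 0 := by
  have := horder fun i => fs.get (i.cast hfs.symm)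
  rwa [← List.ofFn_congr hfs fs.get, List.ofFn_get] at this

lemma iterC_eq_zero_of_lt_length
    (horder : ∀ f : Fin (s + 1) → A, iterC R A Δ (List.ofFn f) = 0)
    {fs : List A} (hfs : s < fs.length) : iterC R A Δ fs = 0 := by
  have hhead : iterC R A Δ (fs.take (s + 1)) = 0 :=
    iterC_eq_zero_of_length_eq horder (by simp [hfs])
  rw [← List.take_append_drop (s + 1) fs, iterC_append, hhead, iterC_zero]

end

/-- Let `Δ ∈ End(A)` be a differential operator of order `≤ s`, i.e.
every `(s+1)`-fold commutator `[…[[Δ, L_{f₀}], L_{f₁}],…, L_{f_s}]` vanishes.  Then all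
derived brackets `{f₁,…,fₙ}_Δ = ([…[[Δ,L_{f₁}],…,L_{fₙ}])(1)` with more than `s`
arguments vanish, and the `s`-th derived bracket satisfies the Leibniz rule in each
argument: `{f₁,…,f_{s−1}, g·h}_Δ = {f₁,…,f_{s−1}, g}_Δ·h + {f₁,…,f_{s−1}, h}_Δ·g`. -/
theorem derived_brackets_of_differential_operator
    (R : Type*) [CommRing R] (A : Type*) [CommRing A] [Algebra R A]
    (Δ : Module.End R A) (s : ℕ)
    (horder : ∀ f : Fin (s + 1) → A, iterC R A Δ (List.ofFn f) = 0) :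
    (∀ fs : List A, s < fs.length → (iterC R A Δ fs) 1 = 0) ∧
    (∀ (fs : List A) (g h : A), fs.length + 1 = s →
      (iterC R A Δ (fs ++ [g * h])) 1 =
        (iterC R A Δ (fs ++ [g])) 1 * h + (iterC R A Δ (fs ++ [h])) 1 * g) := by
  refine ⟨fun fs hfs => by rw [iterC_eq_zero_of_lt_length horder hfs, LinearMap.zero_apply],
    fun fs g h hfs => ?_⟩
  have hdefect : iterC R A (iterC R A Δ fs) [g, h] 1 = 0 := by
    rw [← iterC_append, iterC_eq_zero_of_length_eq horder (by simp [← hfs]),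
      LinearMap.zero_apply]
  rw [iterC_append, iterC_append, iterC_append, iterC_singleton_mul_apply_one, hdefect,
    add_zero]
end
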